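/- For every n ∈ ℕ and every k with 2 ≤ k ≤ n, there exists an impartial selection mechanism f on loopless directed graphs on [n] such that |f(G)| ≤ k for every G, f(G) is always nonempty, and every vertex v ∈ f(G) satisfies indegree(v, G) ≥ Δ(G) − (⌊(n−2)/(k−1)⌋ + 1). -/

import Mathlib

open Finset

abbrev Edges (n : ℕ) := Finset (Fin n × Fin n)

/-- No self-loops. -/
def Loopless {n : ℕ} (E : Edges n) : Prop := ∀ e ∈ E, e.1 ≠ e.2

/-- Indegree of `v`. -/
def indeg {n : ℕ} (E : Edges n) (v : Fin n) : ℕ :=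
  (E.filter (fun e => e.2 = v)).card

/-- Outdegree of `v`. -/
def outdeg {n : ℕ} (E : Edges n) (v : Fin n) : ℕ :=
  (E.filter (fun e => e.1 = v)).card

/-- Maximum indegree Δ(G). -/
def maxIndeg {n : ℕ} (E : Edges n) : ℕ :=
  Finset.univ.sup (indeg E)

/-- Remove all outgoing edges of `v` (the graph `G_v`). -/
def removeOut {n : ℕ} (E : Edges n) (v : Fin n) : Edges n :=
  E.filter (fun e => e.1 ≠ v)

/-- Lexicographic comparison of pairs (indegree, index). -/
def lexLt {n : ℕ} (E : Edges n) (u v : Fin n) : Prop :=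
  indeg E u < indeg E v ∨ (indeg E u = indeg E v ∧ u < v)

/-- `v` is selected by asymmetric plurality with runners-up: `top(G_v) = v`,
i.e. `v` lex-dominates every other vertex in `G_v`. -/
def selected {n : ℕ} (E : Edges n) (v : Fin n) : Prop :=
  ∀ w, w ≠ v → lexLt (removeOut E v) w v

open Classical in
/-- The selected set `P(G)`. -/
noncomputable def P {n : ℕ} (E : Edges n) : Finset (Fin n) :=
  Finset.univ.filter (fun v => selected E v)

/-! ### Auxiliary lemmas -/

/-- The pruned graph: delete all edges `(u,v)` with `u < v ≤ u + m`. -/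
def pruneG {n : ℕ} (m : ℕ) (E : Edges n) : Edges n :=
  E.filter (fun e => ¬ (e.1.val < e.2.val ∧ e.2.val ≤ e.1.val + m))

section Aux

variable {n : ℕ}

lemma mem_P {E : Edges n} {v : Fin n} : v ∈ P E ↔ selected E v := by
  classical
  simp [P]

lemma indeg_mono {E F : Edges n} (h : E ⊆ F) (v : Fin n) : indeg E v ≤ indeg F v :=
  card_le_card (filter_subset_filter _ h)

lemma indeg_removeOut_le (E : Edges n) (v w : Fin n) :
    indeg (removeOut E v) w ≤ indeg E w :=
  indeg_mono (filter_subset _ _) w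

lemma filter_snd_removeOut (E : Edges n) (v w : Fin n) :
    (removeOut E v).filter (fun e => e.2 = w)
      = (E.filter (fun e => e.2 = w)).filter (fun e => ¬ e.1 = v) := by
  ext e
  simp only [removeOut, mem_filter, ne_eq]
  tauto

lemma indeg_le_removeOut_add_one (E : Edges n) (v w : Fin n) :
    indeg E w ≤ indeg (removeOut E v) w + 1 := by
  classical
  have hsplit := Finset.card_filter_add_card_filter_not
    (s := E.filter (fun e => e.2 = w)) (p := fun e => e.1 = v)
  have h1 : ((E.filter (fun e => e.2 = w)).filter (fun e => e.1 = v)).card ≤ 1 := by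
    have hsub : (E.filter (fun e => e.2 = w)).filter (fun e => e.1 = v) ⊆ {(v, w)} := by
      intro e he
      simp only [mem_filter, mem_singleton] at he ⊢
      obtain ⟨⟨_, h2⟩, h3⟩ := he
      exact Prod.ext h3 h2
    simpa using card_le_card hsub
  unfold indeg
  rw [filter_snd_removeOut]
  omega

lemma indeg_removeOut_eq (E : Edges n) (v w : Fin n) (h : (v, w) ∉ E) :
    indeg (removeOut E v) w = indeg E w := by
  unfold indeg
  rw [filter_snd_removeOut]
  congr 1
  apply Finset.filter_true_of_mem
  intro e he
  simp only [mem_filter] at he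
  intro hev
  apply h
  have : e = (v, w) := Prod.ext hev he.2
  rw [← this]; exact he.1

lemma indeg_removeOut_self {E : Edges n} (hE : Loopless E) (v : Fin n) :
    indeg (removeOut E v) v = indeg E v :=
  indeg_removeOut_eq E v v (fun h => hE _ h rfl)

/-- If `v` is selected, every vertex has indegree at most `indeg v + 1`. -/
lemma selected_bound {E : Edges n} (hE : Loopless E) {v : Fin n} (hv : selected E v)
    (w : Fin n) : indeg E w ≤ indeg E v + 1 := by
  by_cases hw : w = v
  · subst hw; omega
  · have h1 := hv w hw
    unfold lexLt at h1
    have h2 : indeg (removeOut E v) v = indeg E v := indeg_removeOut_self hE v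
    have h3 := indeg_le_removeOut_add_one E v w
    rcases h1 with h | ⟨h, _⟩ <;> omega

/-- If `u` is selected and `u < v` then `indeg v ≤ indeg u`. -/
lemma selected_lt_le {E : Edges n} (hE : Loopless E) {u v : Fin n} (hu : selected E u)
    (huv : u < v) : indeg E v ≤ indeg E u := by
  have h1 := hu v huv.ne'
  unfold lexLt at h1
  have h2 : indeg (removeOut E u) u = indeg E u := indeg_removeOut_self hE u
  have h3 := indeg_le_removeOut_add_one E u v
  rcases h1 with h | ⟨h, hlt⟩
  · omega
  · exact absurd hlt (lt_asymm huv)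

/-- If `u` is selected, `u < v` and the edge `(u,v)` is absent, then `indeg v < indeg u`. -/
lemma selected_lt_lt {E : Edges n} (hE : Loopless E) {u v : Fin n} (hu : selected E u)
    (huv : u < v) (hmem : (u, v) ∉ E) : indeg E v < indeg E u := by
  have h1 := hu v huv.ne'
  unfold lexLt at h1
  have h2 : indeg (removeOut E u) u = indeg E u := indeg_removeOut_self hE u
  have h3 : indeg (removeOut E u) v = indeg E v := indeg_removeOut_eq E u v hmem
  rcases h1 with h | ⟨h, hlt⟩
  · omega
  · exact absurd hlt (lt_asymm huv)

/-- Some vertex is always selected (the lex-max one). -/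
lemma exists_selected {E : Edges n} (hE : Loopless E) (hn : 0 < n) :
    ∃ v, selected E v := by
  obtain ⟨v, -, hv⟩ := Finset.exists_max_image (univ : Finset (Fin n))
      (fun v => indeg E v * n + v.val) ⟨⟨0, hn⟩, mem_univ _⟩
  refine ⟨v, fun w hw => ?_⟩
  have hkey := hv w (mem_univ w)
  have hle : indeg E w ≤ indeg E v := by
    by_contra hlt
    push_neg at hlt
    have h1 : (indeg E v + 1) * n ≤ indeg E w * n := Nat.mul_le_mul_right n hlt
    rw [add_mul, one_mul] at h1
    have h2 := v.isLt
    linarith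
  have hGw : indeg (removeOut E v) w ≤ indeg E w := indeg_removeOut_le E v w
  have hGv : indeg (removeOut E v) v = indeg E v := indeg_removeOut_self hE v
  unfold lexLt
  rcases lt_or_eq_of_le (le_trans hGw hle) with h | h
  · left; omega
  · right
    constructor
    · omega
    · have heqw : indeg E w = indeg E v := le_antisymm hle (by omega)
      rw [heqw] at hkey
      have hwv : w.val ≤ v.val := by linarith
      have : w.val ≠ v.val := fun hc => hw (Fin.ext hc)
      exact Fin.lt_def.mpr (by omega)

/-- Pruning recovers at most `m` incoming edges per vertex. -/
lemma indeg_le_pruneG_add (m : ℕ) (E : Edges n) (w : Fin n) :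
    indeg E w ≤ indeg (pruneG m E) w + m := by
  classical
  set p : Fin n × Fin n → Prop := fun e => e.1.val < e.2.val ∧ e.2.val ≤ e.1.val + m with hp
  have hsplit := Finset.card_filter_add_card_filter_not
    (s := E.filter (fun e => e.2 = w)) (p := p)
  have h1 : (pruneG m E).filter (fun e => e.2 = w)
      = (E.filter (fun e => e.2 = w)).filter (fun e => ¬ p e) := by
    ext e
    simp only [pruneG, mem_filter, hp]
    tauto
  have h2 : ((E.filter (fun e => e.2 = w)).filter p).card ≤ m := by
    have hcard : (Finset.Ico (w.val - m) w.val).card ≤ m := by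
      rw [Nat.card_Ico]; omega
    refine le_trans (Finset.card_le_card_of_injOn (fun e => e.1.val) ?_ ?_) hcard
    · intro e he
      simp only [mem_coe, mem_filter, hp] at he
      obtain ⟨⟨_, hew⟩, h4, h5⟩ := he
      have : e.2.val = w.val := by rw [hew]
      show e.1.val ∈ Finset.Ico (w.val - m) w.val
      rw [mem_Ico]
      omega
    · intro e₁ h₁ e₂ h₂ heq
      simp only [coe_filter, Set.mem_setOf_eq, mem_coe, mem_filter] at h₁ h₂
      have he1 : e₁.2 = w := h₁.1.2
      have he2 : e₂.2 = w := h₂.1.2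
      exact Prod.ext (Fin.ext heq) (he1.trans he2.symm)
  unfold indeg
  rw [h1]
  omega

lemma removeOut_pruneG (m : ℕ) (E : Edges n) (v : Fin n) :
    removeOut (pruneG m E) v = pruneG m (removeOut E v) := by
  ext e
  simp only [removeOut, pruneG, mem_filter]
  tauto

lemma selected_congr {E E' : Edges n} {v : Fin n} (h : removeOut E v = removeOut E' v) :
    selected E v ↔ selected E' v := by
  unfold selected lexLt
  rw [h]

lemma loopless_pruneG (m : ℕ) {E : Edges n} (hE : Loopless E) : Loopless (pruneG m E) :=
  fun e he => hE e (mem_of_mem_filter e he)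

lemma pruneG_not_mem (m : ℕ) (E : Edges n) {u v : Fin n}
    (h1 : u.val < v.val) (h2 : v.val ≤ u.val + m) : (u, v) ∉ pruneG m E := by
  intro hmem
  simp only [pruneG, mem_filter] at hmem
  exact hmem.2 ⟨h1, h2⟩

/-- Cardinality bound for the selected set of a graph with no short forward edges. -/
lemma card_P_le {E : Edges n} (hE : Loopless E) (m : ℕ)
    (hdel : ∀ u v : Fin n, u.val < v.val → v.val ≤ u.val + m → (u, v) ∉ E) :
    (P E).card ≤ (n - 1 + m) / (m + 1) + 1 := by
  classical
  rcases (P E).eq_empty_or_nonempty with h | hS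
  · simp [h]
  have hu0mem : (P E).min' hS ∈ P E := (P E).min'_mem hS
  set u0 := (P E).min' hS with hu0def
  have hsel : ∀ v ∈ P E, selected E v := fun v hv => mem_P.mp hv
  have hu0sel := hsel u0 hu0mem
  have key : ∀ v ∈ P E, indeg E v ≤ indeg E u0 ∧ indeg E u0 ≤ indeg E v + 1 := by
    intro v hv
    rcases eq_or_lt_of_le ((P E).min'_le v hv) with h | h
    · rw [← h, ← hu0def]; omega
    · exact ⟨selected_lt_le hE hu0sel h, selected_bound hE (hsel v hv) u0⟩
  set g : Fin n → ℕ := fun v => (v.val + (indeg E u0 - indeg E v) * m) / (m + 1) with hg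
  have hmono : ∀ u ∈ P E, ∀ v ∈ P E, u < v → g u < g v := by
    intro u hu v hv huv
    have h1 := key u hu
    have h2 := key v hv
    have hdvu : indeg E v ≤ indeg E u := selected_lt_le hE (hsel u hu) huv
    have huvval : u.val < v.val := Fin.lt_def.mp huv
    have hclose : indeg E u = indeg E v → u.val + m < v.val := by
      intro hEq
      by_contra hc
      push_neg at hc
      have := selected_lt_lt hE (hsel u hu) huv (hdel u v huvval hc)
      omega
    have hkey : u.val + (indeg E u0 - indeg E u) * m + (m + 1)
        ≤ v.val + (indeg E u0 - indeg E v) * m := by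
      have ha : indeg E u0 - indeg E u = 0 ∨ indeg E u0 - indeg E u = 1 := by omega
      have hb : indeg E u0 - indeg E v = 0 ∨ indeg E u0 - indeg E v = 1 := by omega
      rcases ha with ha | ha <;> rcases hb with hb | hb <;> rw [ha, hb]
      · have := hclose (by omega); omega
      · omega
      · omega
      · have := hclose (by omega); omega
    calc g u < (u.val + (indeg E u0 - indeg E u) * m + (m + 1)) / (m + 1) := by
            rw [Nat.add_div_right _ (Nat.succ_pos m)]
            exact Nat.lt_succ_self _
      _ ≤ g v := Nat.div_le_div_right hkey
  have himg : ∀ v ∈ P E, g v ∈ Finset.range ((n - 1 + m) / (m + 1) + 1) := by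
    intro v hv
    rw [mem_range, Nat.lt_succ_iff]
    apply Nat.div_le_div_right
    have h2 := key v hv
    have hvlt := v.isLt
    have hc : indeg E u0 - indeg E v = 0 ∨ indeg E u0 - indeg E v = 1 := by omega
    rcases hc with hc | hc <;> rw [hc] <;> omega
  have hinj : Set.InjOn g ↑(P E) := by
    intro u hu v hv heq
    simp only [mem_coe] at hu hv
    rcases lt_trichotomy u v with h | h | h
    · exact absurd heq (Nat.ne_of_lt (hmono u hu v hv h))
    · exact h
    · exact absurd heq.symm (Nat.ne_of_lt (hmono v hv u hu h))
  have := Finset.card_le_card_of_injOn g himg hinj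
  simpa using this

end Aux

/-- Theorem (trade-off): for 2 ≤ k ≤ n there is an impartial k-selection
mechanism that is (⌊(n−2)/(k−1)⌋+1)-min-additive on all loopless digraphs. -/
theorem stmt_12 {n k : ℕ} (hk1 : 2 ≤ k) (hk2 : k ≤ n) :
    ∃ f : Edges n → Finset (Fin n),
      (∀ E : Edges n, Loopless E → (f E).card ≤ k) ∧
      (∀ E E' : Edges n, ∀ v : Fin n, Loopless E → Loopless E' →
        removeOut E v = removeOut E' v → (v ∈ f E ↔ v ∈ f E')) ∧
      (∀ E : Edges n, Loopless E → (f E).Nonempty ∧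
        ∀ v ∈ f E, maxIndeg E ≤ indeg E v + ((n - 2) / (k - 1) + 1)) := by
  classical
  have hn2 : 2 ≤ n := le_trans hk1 hk2
  set m := (n - 2) / (k - 1) with hm
  refine ⟨fun E => P (pruneG m E), ?_, ?_, ?_⟩
  · -- cardinality
    intro E hE
    have hbound := card_P_le (loopless_pruneG m hE) m
      (fun u v h1 h2 => pruneG_not_mem m E h1 h2)
    refine le_trans hbound ?_
    -- arithmetic: (n - 1 + m) / (m + 1) + 1 ≤ k
    have hk1' : 0 < k - 1 := by omega
    have hdm := Nat.div_add_mod (n - 2) (k - 1)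
    rw [← hm] at hdm
    have hmod : (n - 2) % (k - 1) < k - 1 := Nat.mod_lt _ hk1'
    have hlin : n - 1 ≤ (k - 1) * (m + 1) := by
      have e1 : (k - 1) * (m + 1) = (k - 1) * m + (k - 1) := by ring
      obtain ⟨t, ht⟩ : ∃ t, t = (k - 1) * m := ⟨_, rfl⟩
      rw [e1, ← ht]
      rw [← ht] at hdm
      omega
    have hBA : k * (m + 1) = (k - 1) * (m + 1) + (m + 1) := by
      have hk' : k - 1 + 1 = k := by omega
      calc k * (m + 1) = (k - 1 + 1) * (m + 1) := by rw [hk']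
        _ = (k - 1) * (m + 1) + (m + 1) := by rw [add_mul, one_mul]
    have hlt : n - 1 + m < k * (m + 1) := by
      obtain ⟨A, hA⟩ : ∃ A, A = (k - 1) * (m + 1) := ⟨_, rfl⟩
      rw [← hA] at hlin hBA
      omega
    have hdiv : (n - 1 + m) / (m + 1) < k :=
      (Nat.div_lt_iff_lt_mul (Nat.succ_pos m)).mpr hlt
    omega
  · -- impartiality
    intro E E' v hE hE' h
    rw [mem_P, mem_P]
    exact selected_congr (by rw [removeOut_pruneG, removeOut_pruneG, h])
  · -- nonemptiness and approximation
    intro E hE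
    have hEp : Loopless (pruneG m E) := loopless_pruneG m hE
    constructor
    · obtain ⟨v, hv⟩ := exists_selected hEp (by omega)
      exact ⟨v, mem_P.mpr hv⟩
    · intro v hv
      have hsel : selected (pruneG m E) v := mem_P.mp hv
      apply Finset.sup_le
      intro w _
      have h1 : indeg E w ≤ indeg (pruneG m E) w + m := indeg_le_pruneG_add m E w
      have h2 : indeg (pruneG m E) w ≤ indeg (pruneG m E) v + 1 :=
        selected_bound hEp hsel w
      have h3 : indeg (pruneG m E) v ≤ indeg E v :=
        indeg_mono (filter_subset _ _) v
      omega
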